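/- Let L be an axis on a finite set 𝒜 and P_1,...,P_n strict linear orders on 𝒜, each single-peaked with respect to L, with n odd. Then the strict pairwise majority relation ≻_M is a strict linear order (complete, asymmetric, transitive) on 𝒜. -/

import Mathlib

/-!
Let `x ≻ y ≻ z ≻ x` be a majority cycle. One of the three alternatives, `m`, lies between the
other two on the axis; name those `u` and `w` so that the cycle contains `u ≻ m` and `w ≻ u`.
Each of these two strict majorities holds more than half of the voters, so some voter is in
both and ranks `m` below `u` and `w`, which no single-peaked order does. With an odd number
of voters there are no majority ties, so the majority relation is complete, and completeness
together with the absence of 3-cycles gives transitivity.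
-/

variable {α : Type*}

/-- Swap distance: number of ordered pairs `(a,b)` with `a ≻_P b` and `b ≻_Q a`.
For strict linear orders this counts each disagreeing unordered pair exactly once. -/
noncomputable def swapDist (P Q : α → α → Prop) : ℕ :=
  Set.ncard {p : α × α | P p.1 p.2 ∧ Q p.2 p.1}

/-- `a` and `b` are adjacent in `P` (with `a` just above `b`): `P a b` and nothing in between. -/
def Adjacent (P : α → α → Prop) (a b : α) : Prop :=
  P a b ∧ ¬ ∃ c, P a c ∧ P c b

/-- `Q` is obtained from `P` by swapping the adjacent pair `{a, b}`:
`Q` reverses the pair and agrees with `P` on every other pair. -/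
def SwapOf (P Q : α → α → Prop) (a b : α) : Prop :=
  Adjacent P a b ∧ Q b a ∧
    ∀ x y, ({x, y} : Set α) ≠ {a, b} → (Q x y ↔ P x y)

/-- Number of voters preferring `x` to `y`. -/
noncomputable def majCount {n : ℕ} (P : Fin n → α → α → Prop) (x y : α) : ℕ :=
  Set.ncard {i | P i x y}

/-- Strict pairwise majority relation. -/
def StrictMaj {n : ℕ} (P : Fin n → α → α → Prop) (x y : α) : Prop :=
  majCount P y x < majCount P x y

/-- Weak pairwise majority relation. -/
def WeakMaj {n : ℕ} (P : Fin n → α → α → Prop) (x y : α) : Prop :=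
  majCount P y x ≤ majCount P x y

/-- `P` is single-peaked with respect to the axis `L`: there is a peak `b`
(the `P`-maximum) such that whenever `a` lies between `c` and the peak along `L`
(weakly on the peak side), `a ≻_P c`. -/
def SinglePeaked (L P : α → α → Prop) : Prop :=
  ∃ b : α, (∀ a, a ≠ b → P b a) ∧
    ∀ a c : α, ((L b a ∨ b = a) ∧ L a c) ∨ (L c a ∧ (L a b ∨ a = b)) → P a c

def StrictlyBetween (L : α → α → Prop) (u m w : α) : Prop :=
  (L u m ∧ L m w) ∨ (L w m ∧ L m u)

section Axis

variable {L : α → α → Prop}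

theorem strictlyBetween_or_strictlyBetween_or_strictlyBetween [IsStrictTotalOrder α L]
    {x y z : α} (hxy : x ≠ y) (hyz : y ≠ z) (hzx : z ≠ x) :
    StrictlyBetween L x y z ∨ StrictlyBetween L y z x ∨ StrictlyBetween L z x y := by
  have htrans : ∀ {a b c}, L a b → L b c → L a c := _root_.trans
  have := trichotomous_of L x y
  have := trichotomous_of L y z
  have := trichotomous_of L z x
  unfold StrictlyBetween
  grind

theorem SinglePeaked.rel_or_rel_of_strictlyBetween [Std.Trichotomous L] {P : α → α → Prop}
    (hP : SinglePeaked L P) {u m w : α} (hm : StrictlyBetween L u m w) : P m u ∨ P m w := by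
  obtain ⟨b, -, hmono⟩ := hP
  rcases hm with ⟨hum, hmw⟩ | ⟨hwm, hmu⟩ <;> rcases trichotomous_of L b m with hbm | rfl | hmb
  · exact Or.inr (hmono m w (Or.inl ⟨Or.inl hbm, hmw⟩))
  · exact Or.inr (hmono b w (Or.inl ⟨Or.inr rfl, hmw⟩))
  · exact Or.inl (hmono m u (Or.inr ⟨hum, Or.inl hmb⟩))
  · exact Or.inl (hmono m u (Or.inl ⟨Or.inl hbm, hmu⟩))
  · exact Or.inl (hmono b u (Or.inl ⟨Or.inr rfl, hmu⟩))
  · exact Or.inr (hmono m w (Or.inr ⟨hwm, Or.inl hmb⟩))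

end Axis

section Majority

variable {n : ℕ} {P : Fin n → α → α → Prop} {x y z w : α}

theorem StrictMaj.ne (h : StrictMaj P x y) : x ≠ y := by
  rintro rfl
  exact lt_irrefl _ h

theorem StrictMaj.asymm (h : StrictMaj P x y) : ¬ StrictMaj P y x :=
  lt_asymm h

theorem majCount_add_majCount [∀ i, IsStrictTotalOrder α (P i)] (hxy : x ≠ y) :
    majCount P x y + majCount P y x = n := by
  have hcompl : {i | P i y x} = {i | P i x y}ᶜ := by
    ext i
    have := trichotomous_of (P i) x y
    have : P i x y → ¬ P i y x := asymm
    simp only [Set.mem_ofPred_eq, Set.mem_compl_iff]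
    tauto
  rw [majCount, majCount, hcompl, Set.ncard_add_ncard_compl, Nat.card_fin]

theorem StrictMaj.lt_two_mul_majCount [∀ i, IsStrictTotalOrder α (P i)] (h : StrictMaj P x y) :
    n < 2 * majCount P x y := by
  have := majCount_add_majCount (P := P) h.ne
  unfold StrictMaj at h
  omega

theorem strictMaj_or_strictMaj_of_odd [∀ i, IsStrictTotalOrder α (P i)] (hn : Odd n)
    (hxy : x ≠ y) : StrictMaj P x y ∨ StrictMaj P y x := by
  have := majCount_add_majCount (P := P) hxy
  obtain ⟨k, rfl⟩ := hn
  unfold StrictMaj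
  omega

theorem StrictMaj.exists_common_voter [∀ i, IsStrictTotalOrder α (P i)]
    (hxy : StrictMaj P x y) (hzw : StrictMaj P z w) : ∃ i, P i x y ∧ P i z w := by
  have h₁ := hxy.lt_two_mul_majCount
  have h₂ := hzw.lt_two_mul_majCount
  have hcard : Nat.card (Fin n) < majCount P x y + majCount P z w := by
    rw [Nat.card_fin]
    omega
  exact Set.nonempty_inter_of_lt_ncard_add_ncard hcard

end Majority

section SinglePeakedProfile

variable {n : ℕ} {L : α → α → Prop} {P : Fin n → α → α → Prop}
  [∀ i, IsStrictTotalOrder α (P i)] {x y z : α}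

theorem StrictMaj.not_strictMaj_of_strictlyBetween [Std.Trichotomous L]
    (hsp : ∀ i, SinglePeaked L (P i)) {u m w : α} (hm : StrictlyBetween L u m w)
    (hum : StrictMaj P u m) : ¬ StrictMaj P w u := by
  intro hwu
  obtain ⟨i, hi_um, hi_wu⟩ := hum.exists_common_voter hwu
  rcases (hsp i).rel_or_rel_of_strictlyBetween hm with hi_mu | hi_mw
  · exact _root_.asymm hi_um hi_mu
  · exact _root_.asymm (_root_.trans hi_wu hi_um) hi_mw

theorem not_strictMaj_cycle [IsStrictTotalOrder α L] (hsp : ∀ i, SinglePeaked L (P i))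
    (hxy : StrictMaj P x y) (hyz : StrictMaj P y z) : ¬ StrictMaj P z x := by
  intro hzx
  rcases strictlyBetween_or_strictlyBetween_or_strictlyBetween (L := L) hxy.ne hyz.ne hzx.ne
    with h | h | h
  · exact hxy.not_strictMaj_of_strictlyBetween hsp h hzx
  · exact hyz.not_strictMaj_of_strictlyBetween hsp h hxy
  · exact hzx.not_strictMaj_of_strictlyBetween hsp h hyz

theorem StrictMaj.trans_of_odd [IsStrictTotalOrder α L] (hn : Odd n)
    (hsp : ∀ i, SinglePeaked L (P i)) (hxy : StrictMaj P x y) (hyz : StrictMaj P y z) :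
    StrictMaj P x z := by
  have hxz : x ≠ z := by
    rintro rfl
    exact hxy.asymm hyz
  exact (strictMaj_or_strictMaj_of_odd hn hxz).resolve_right (not_strictMaj_cycle hsp hxy hyz)

end SinglePeakedProfile

theorem stmt9_general {n : ℕ} (hodd : Odd n)
    (L : α → α → Prop) (hL : IsStrictTotalOrder α L)
    (P : Fin n → α → α → Prop) (hP : ∀ i, IsStrictTotalOrder α (P i))
    (hsp : ∀ i, SinglePeaked L (P i)) :
    (∀ x y : α, x ≠ y → StrictMaj P x y ∨ StrictMaj P y x) ∧
      (∀ x y : α, StrictMaj P x y → ¬ StrictMaj P y x) ∧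
      Transitive (StrictMaj P) :=
  ⟨fun _ _ => strictMaj_or_strictMaj_of_odd hodd, fun _ _ => StrictMaj.asymm,
    fun _ _ _ => StrictMaj.trans_of_odd hodd hsp⟩

/-- Black's theorem: on a single-peaked profile with an odd number of voters,
strict pairwise majority is a strict linear order (complete, asymmetric,
transitive). -/
theorem stmt9 [Fintype α] {n : ℕ} (hodd : Odd n)
    (L : α → α → Prop) (hL : IsStrictTotalOrder α L)
    (P : Fin n → α → α → Prop) (hP : ∀ i, IsStrictTotalOrder α (P i))
    (hsp : ∀ i, SinglePeaked L (P i)) :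
    (∀ x y : α, x ≠ y → StrictMaj P x y ∨ StrictMaj P y x) ∧
      (∀ x y : α, StrictMaj P x y → ¬ StrictMaj P y x) ∧
      Transitive (StrictMaj P) :=
  stmt9_general hodd L hL P hP hsp
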